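/- Let (X, τ, I) be an ideal topological space and A ⊆ X. Then A^♯(I,τ) ∪ A*(I,τ) = cl(A), the closure of A in (X, τ). -/

import Mathlib

open Set

def IsIdeal {X : Type*} (I : Set (Set X)) : Prop :=
  I.Nonempty ∧ (∀ A B : Set X, A ∈ I → B ⊆ A → B ∈ I) ∧
    (∀ A B : Set X, A ∈ I → B ∈ I → A ∪ B ∈ I)

def IsMaximalIdeal {X : Type*} (I : Set (Set X)) : Prop :=
  IsIdeal I ∧ I ≠ Set.univ ∧
    ∀ J : Set (Set X), IsIdeal J → I ⊆ J → J = I ∨ J = Set.univ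

def IsMinimalIdeal {X : Type*} (I : Set (Set X)) : Prop :=
  IsIdeal I ∧ I ≠ {∅} ∧ I ≠ Set.univ ∧
    ∀ J : Set (Set X), IsIdeal J → J ⊆ I → J = I ∨ J = {∅}

def Ann {X : Type*} (J : Set (Set X)) : Set (Set X) :=
  {A | ∀ B ∈ J, A ∩ B = ∅}

def idealQuot {X : Type*} (I J : Set (Set X)) : Set (Set X) :=
  {A | ∀ B ∈ J, A ∩ B ∈ I}

def localFn {X : Type*} [TopologicalSpace X] (I : Set (Set X)) (A : Set X) : Set X :=
  {x | ∀ U : Set X, IsOpen U → x ∈ U → U ∩ A ∉ I}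

def sharpFn {X : Type*} [TopologicalSpace X] (I : Set (Set X)) (A : Set X) : Set X :=
  {x | ∀ U : Set X, IsOpen U → x ∈ U → ∃ J ∈ I, J.Nonempty ∧ J ⊆ U ∩ A}

def starTop {X : Type*} (τ : TopologicalSpace X) (I : Set (Set X)) : TopologicalSpace X :=
  TopologicalSpace.generateFrom {A | @localFn X τ I Aᶜ ⊆ Aᶜ}

def sharpTop {X : Type*} (τ : TopologicalSpace X) (I : Set (Set X)) : TopologicalSpace X :=
  TopologicalSpace.generateFrom {A | @localFn X τ (Ann I) Aᶜ ⊆ Aᶜ}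

theorem IsIdeal.empty_mem {X : Type*} {I : Set (Set X)} (hI : IsIdeal I) : ∅ ∈ I := by
  obtain ⟨⟨S, hS⟩, hdown, -⟩ := hI
  exact hdown S ∅ hS (empty_subset S)

section

variable {X : Type*} [TopologicalSpace X] {I : Set (Set X)} {A : Set X}

theorem sharpFn_subset_closure : sharpFn I A ⊆ closure A := by
  intro x hx
  rw [mem_closure_iff]
  intro U hU hxU
  obtain ⟨J, -, hJne, hJU⟩ := hx U hU hxU
  exact hJne.mono hJU

theorem localFn_subset_closure (hI : ∅ ∈ I) : localFn I A ⊆ closure A := by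
  intro x hx
  rw [mem_closure_iff]
  intro U hU hxU
  exact nonempty_iff_ne_empty.2 fun hUA => hx U hU hxU (hUA ▸ hI)

/-- A point of `closure A` outside `localFn I A` has a neighbourhood `U` with `U ∩ A ∈ I`; for every
open `V ∋ x` the set `V ∩ U ∩ A` is then a nonempty member of `I` inside `V ∩ A`. -/
theorem closure_subset_sharpFn_union_localFn
    (hdown : ∀ B C : Set X, B ∈ I → C ⊆ B → C ∈ I) :
    closure A ⊆ sharpFn I A ∪ localFn I A := by
  intro x hx
  by_cases hloc : x ∈ localFn I A
  · exact Or.inr hloc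
  left
  obtain ⟨U, hU, hxU, hUA⟩ : ∃ U, IsOpen U ∧ x ∈ U ∧ U ∩ A ∈ I := by
    simpa [localFn] using hloc
  intro V hV hxV
  refine ⟨V ∩ U ∩ A, hdown _ _ hUA ?_, mem_closure_iff.1 hx _ (hV.inter hU) ⟨hxV, hxU⟩, ?_⟩
  · exact inter_subset_inter_left A inter_subset_right
  · exact inter_subset_inter_left A inter_subset_left

end

theorem stmt18 {X : Type*} [TopologicalSpace X] (I : Set (Set X)) (hI : IsIdeal I)
    (A : Set X) :
    sharpFn I A ∪ localFn I A = closure A :=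
  (union_subset sharpFn_subset_closure (localFn_subset_closure hI.empty_mem)).antisymm
    (closure_subset_sharpFn_union_localFn hI.2.1)
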